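/- (Second family, Case λ₁ = λ₃ = 0, λ₂ ≠ 0) Under the ruled hypothesis Q = −uP, u_y + u·u_x = 0, suppose Δx = λ₁·x, Δy = λ₂·y, Δf = λ₃·f on D for real constants with λ₁ = λ₃ = 0, λ₂ ≠ 0, and suppose P is nowhere zero on D. Then H₁ = uW, i.e. f_xx + f_yy = u·(1 + P²(1 + u²)) on D, and moreover −P(1 + u²)/W² = λ₂·y and 2u/W² = λ₂·xy on D. -/

import Mathlib

noncomputable section

/-- Partial derivative with respect to the first (x) variable. -/
def pdx (f : ℝ × ℝ → ℝ) : ℝ × ℝ → ℝ := fun p => fderiv ℝ f p (1, 0)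

/-- Partial derivative with respect to the second (y) variable. -/
def pdy (f : ℝ × ℝ → ℝ) : ℝ × ℝ → ℝ := fun p => fderiv ℝ f p (0, 1)

/-- `P = f_x + y/2`. -/
def Pf (f : ℝ × ℝ → ℝ) : ℝ × ℝ → ℝ := fun p => pdx f p + p.2 / 2

/-- `Q = f_y - x/2`. -/
def Qf (f : ℝ × ℝ → ℝ) : ℝ × ℝ → ℝ := fun p => pdy f p - p.1 / 2

/-- First fundamental form coefficient `E = 1 + P²`. -/
def Ef (f : ℝ × ℝ → ℝ) : ℝ × ℝ → ℝ := fun p => 1 + Pf f p ^ 2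

/-- First fundamental form coefficient `F = P·Q`. -/
def Ff (f : ℝ × ℝ → ℝ) : ℝ × ℝ → ℝ := fun p => Pf f p * Qf f p

/-- First fundamental form coefficient `G = 1 + Q²`. -/
def Gf (f : ℝ × ℝ → ℝ) : ℝ × ℝ → ℝ := fun p => 1 + Qf f p ^ 2

/-- `W = √(EG − F²) = √(1 + P² + Q²)`. -/
def Wf (f : ℝ × ℝ → ℝ) : ℝ × ℝ → ℝ := fun p => Real.sqrt (1 + Pf f p ^ 2 + Qf f p ^ 2)

/-- Second fundamental form coefficient `L = (f_xx + PQ)/W`. -/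
def Lf (f : ℝ × ℝ → ℝ) : ℝ × ℝ → ℝ := fun p => (pdx (pdx f) p + Pf f p * Qf f p) / Wf f p

/-- Second fundamental form coefficient `M = (f_xy + (Q² − P²)/2)/W`. -/
def Mf (f : ℝ × ℝ → ℝ) : ℝ × ℝ → ℝ :=
  fun p => (pdx (pdy f) p + (Qf f p ^ 2 - Pf f p ^ 2) / 2) / Wf f p

/-- Second fundamental form coefficient `N = (f_yy − PQ)/W`. -/
def Nf (f : ℝ × ℝ → ℝ) : ℝ × ℝ → ℝ := fun p => (pdy (pdy f) p - Pf f p * Qf f p) / Wf f p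

/-- Mean curvature `H = (EN − 2FM + GL)/(2W²)`. -/
def Hf (f : ℝ × ℝ → ℝ) : ℝ × ℝ → ℝ :=
  fun p => (Ef f p * Nf f p - 2 * Ff f p * Mf f p + Gf f p * Lf f p) / (2 * Wf f p ^ 2)

/-- The Laplace–Beltrami operator of the graph of `f`, with the sign convention
`Δφ = −(1/W)[∂_x((G φ_x − F φ_y)/W) + ∂_y((−F φ_x + E φ_y)/W)]`. -/
def lapS (f φ : ℝ × ℝ → ℝ) : ℝ × ℝ → ℝ := fun p =>
  -(1 / Wf f p) *
    (pdx (fun q => (Gf f q * pdx φ q - Ff f q * pdy φ q) / Wf f q) p +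
     pdy (fun q => (-(Ff f q) * pdx φ q + Ef f q * pdy φ q) / Wf f q) p)

/-- Mean curvature in the form `H = (f_xx + f_yy)/(2W³)`. -/
def Hm (f : ℝ × ℝ → ℝ) : ℝ × ℝ → ℝ :=
  fun p => (pdx (pdx f) p + pdy (pdy f) p) / (2 * Wf f p ^ 3)

/-- `H₁ = (f_xx + f_yy)/W`. -/
def H1f (f : ℝ × ℝ → ℝ) : ℝ × ℝ → ℝ :=
  fun p => (pdx (pdx f) p + pdy (pdy f) p) / Wf f p

/-!
With `S = W²` and `K = G f_xx − 2F f_xy + E f_yy`, the Laplacians of the coordinate functions are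
`Δx = (PK + QS)/S²`, `Δy = (QK − PS)/S²` and `Δf = −K/S² − (y/2)Δx + (x/2)Δy`.
Since `Δx = 0`, `Q = −uP` and `P ≠ 0`, this forces `K = uS`. Differentiating `Q + uP = 0` and using
Burgers' equation `u_y + u u_x = 0` shows that the Hessian of `f` vanishes on the ruling direction
`(u, 1)`, i.e. `u² f_xx + 2u f_xy + f_yy = 0`, which turns `K` into `f_xx + f_yy`. The other two
identities are `Δy = λ₂y` and `Δf = 0` rewritten with `K = uS`.
-/

section DirectionalDerivative

variable {E : Type*} [NormedAddCommGroup E] [NormedSpace ℝ E] {g h : E → ℝ} {x : E}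

theorem fderiv_fun_div_apply (hg : DifferentiableAt ℝ g x) (hh : DifferentiableAt ℝ h x)
    (hx : h x ≠ 0) (v : E) :
    fderiv ℝ (fun y => g y / h y) x v
      = (fderiv ℝ g x v * h x - g x * fderiv ℝ h x v) / h x ^ 2 := by
  have hinv : HasFDerivAt (fun y => (h y)⁻¹) ((-(h x ^ 2)⁻¹) • fderiv ℝ h x) x :=
    (hasDerivAt_inv hx).comp_hasFDerivAt x hh.hasFDerivAt
  simp only [div_eq_mul_inv]
  rw [(hg.hasFDerivAt.fun_mul hinv).fderiv]
  simp only [neg_smul, smul_neg, add_apply, neg_apply, smul_apply, smul_eq_mul]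
  field_simp
  ring

end DirectionalDerivative

section GraphSurface

variable {f : ℝ × ℝ → ℝ} {p : ℝ × ℝ}

def Sf (f : ℝ × ℝ → ℝ) : ℝ × ℝ → ℝ := fun p => 1 + Pf f p ^ 2 + Qf f p ^ 2

/-- `K = 2HW³`, where `H = Hf f` is the mean curvature. -/
def Kf (f : ℝ × ℝ → ℝ) : ℝ × ℝ → ℝ := fun p =>
  Gf f p * pdx (pdx f) p - 2 * Ff f p * pdx (pdy f) p + Ef f p * pdy (pdy f) p

/-- `fluxX f φ` and `fluxY f φ` are `W² g^{1j} ∂_j φ` and `W² g^{2j} ∂_j φ`, so that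
`Δφ = −(1/W) (∂_x (fluxX/W) + ∂_y (fluxY/W))`. -/
def fluxX (f φ : ℝ × ℝ → ℝ) : ℝ × ℝ → ℝ := fun q => Gf f q * pdx φ q - Ff f q * pdy φ q

def fluxY (f φ : ℝ × ℝ → ℝ) : ℝ × ℝ → ℝ := fun q => -(Ff f q) * pdx φ q + Ef f q * pdy φ q

theorem Sf_pos : 0 < Sf f p := by unfold Sf; positivity

theorem Wf_pos : 0 < Wf f p := Real.sqrt_pos.2 Sf_pos

theorem Wf_mul_self : Wf f p * Wf f p = Sf f p := Real.mul_self_sqrt Sf_pos.le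

theorem Wf_sq : Wf f p ^ 2 = Sf f p := Real.sq_sqrt Sf_pos.le

theorem pdx_fst : pdx (fun q : ℝ × ℝ => q.1) p = 1 := by simp [pdx, fderiv_fst]

theorem pdy_fst : pdy (fun q : ℝ × ℝ => q.1) p = 0 := by simp [pdy, fderiv_fst]

theorem pdx_snd : pdx (fun q : ℝ × ℝ => q.2) p = 0 := by simp [pdx, fderiv_snd]

theorem pdy_snd : pdy (fun q : ℝ × ℝ => q.2) p = 1 := by simp [pdy, fderiv_snd]

theorem fluxX_fst : fluxX f (fun q => q.1) = Gf f := by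
  ext q; simp [fluxX, pdx_fst, pdy_fst]

theorem fluxY_fst : fluxY f (fun q => q.1) = fun q => -Ff f q := by
  ext q; simp [fluxY, pdx_fst, pdy_fst]

theorem fluxX_snd : fluxX f (fun q => q.2) = fun q => -Ff f q := by
  ext q; simp [fluxX, pdx_snd, pdy_snd]

theorem fluxY_snd : fluxY f (fun q => q.2) = Ef f := by
  ext q; simp [fluxY, pdx_snd, pdy_snd]

theorem fluxX_self : fluxX f f = fun q => Pf f q - q.2 / 2 * Gf f q - q.1 / 2 * Ff f q := by
  ext q; simp only [fluxX, Pf, Qf, Ff, Gf]; ring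

theorem fluxY_self : fluxY f f = fun q => Qf f q + q.2 / 2 * Ff f q + q.1 / 2 * Ef f q := by
  ext q; simp only [fluxY, Pf, Qf, Ef, Ff]; ring

theorem fderiv_fst_div_two_apply (v : ℝ × ℝ) :
    fderiv ℝ (fun q : ℝ × ℝ => q.1 / 2) p v = v.1 / 2 := by
  simp [div_eq_mul_inv, fderiv_mul_const, fderiv_fst, mul_comm]

theorem fderiv_snd_div_two_apply (v : ℝ × ℝ) :
    fderiv ℝ (fun q : ℝ × ℝ => q.2 / 2) p v = v.2 / 2 := by
  simp [div_eq_mul_inv, fderiv_mul_const, fderiv_snd, mul_comm]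

theorem fderiv_Pf_apply (h : DifferentiableAt ℝ (pdx f) p) (v : ℝ × ℝ) :
    fderiv ℝ (Pf f) p v = fderiv ℝ (pdx f) p v + v.2 / 2 := by
  change fderiv ℝ (fun q => pdx f q + q.2 / 2) p v = _
  rw [fderiv_fun_add h (by fun_prop), add_apply, fderiv_snd_div_two_apply]

theorem fderiv_Qf_apply (h : DifferentiableAt ℝ (pdy f) p) (v : ℝ × ℝ) :
    fderiv ℝ (Qf f) p v = fderiv ℝ (pdy f) p v - v.1 / 2 := by
  change fderiv ℝ (fun q => pdy f q - q.1 / 2) p v = _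
  rw [fderiv_fun_sub h (by fun_prop), sub_apply, fderiv_fst_div_two_apply]

theorem fderiv_Ef_apply (hP : DifferentiableAt ℝ (Pf f) p) (v : ℝ × ℝ) :
    fderiv ℝ (Ef f) p v = 2 * Pf f p * fderiv ℝ (Pf f) p v := by
  change fderiv ℝ (fun q => 1 + Pf f q ^ 2) p v = _
  simp [fderiv_fun_pow 2 hP]

theorem fderiv_Gf_apply (hQ : DifferentiableAt ℝ (Qf f) p) (v : ℝ × ℝ) :
    fderiv ℝ (Gf f) p v = 2 * Qf f p * fderiv ℝ (Qf f) p v := by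
  change fderiv ℝ (fun q => 1 + Qf f q ^ 2) p v = _
  simp [fderiv_fun_pow 2 hQ]

section FirstOrder

variable (hP : DifferentiableAt ℝ (Pf f) p) (hQ : DifferentiableAt ℝ (Qf f) p)
include hP hQ

theorem fderiv_Ff_apply (v : ℝ × ℝ) :
    fderiv ℝ (Ff f) p v = Pf f p * fderiv ℝ (Qf f) p v + Qf f p * fderiv ℝ (Pf f) p v := by
  change fderiv ℝ (fun q => Pf f q * Qf f q) p v = _
  simp [fderiv_fun_mul hP hQ]

theorem fderiv_neg_Ff_apply (v : ℝ × ℝ) :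
    fderiv ℝ (fun q => -Ff f q) p v
      = -(Pf f p * fderiv ℝ (Qf f) p v + Qf f p * fderiv ℝ (Pf f) p v) := by
  simp [fderiv_fun_neg, fderiv_Ff_apply hP hQ]

theorem differentiableAt_Sf : DifferentiableAt ℝ (Sf f) p := by unfold Sf; fun_prop

theorem fderiv_Sf_apply (v : ℝ × ℝ) :
    fderiv ℝ (Sf f) p v
      = 2 * Pf f p * fderiv ℝ (Pf f) p v + 2 * Qf f p * fderiv ℝ (Qf f) p v := by
  change fderiv ℝ (fun q => 1 + Pf f q ^ 2 + Qf f q ^ 2) p v = _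
  rw [fderiv_fun_add (by fun_prop) (by fun_prop), add_apply]
  simp [fderiv_fun_pow 2 hP, fderiv_fun_pow 2 hQ]

theorem differentiableAt_Wf : DifferentiableAt ℝ (Wf f) p :=
  (differentiableAt_Sf hP hQ).sqrt Sf_pos.ne'

theorem fderiv_Wf_apply (v : ℝ × ℝ) :
    fderiv ℝ (Wf f) p v
      = (Pf f p * fderiv ℝ (Pf f) p v + Qf f p * fderiv ℝ (Qf f) p v) / Wf f p := by
  change fderiv ℝ (fun q => √(Sf f q)) p v = _
  rw [fderiv_sqrt (differentiableAt_Sf hP hQ) Sf_pos.ne', smul_apply, smul_eq_mul,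
    fderiv_Sf_apply hP hQ]
  change 1 / (2 * Wf f p) * _ = _
  field_simp

theorem fderiv_div_Wf_apply {A : ℝ × ℝ → ℝ} (hA : DifferentiableAt ℝ A p) (v : ℝ × ℝ) :
    fderiv ℝ (fun q => A q / Wf f q) p v
      = (fderiv ℝ A p v * Sf f p
          - A p * (Pf f p * fderiv ℝ (Pf f) p v + Qf f p * fderiv ℝ (Qf f) p v))
        / (Wf f p * Sf f p) := by
  rw [fderiv_fun_div_apply hA (differentiableAt_Wf hP hQ) Wf_pos.ne',
    fderiv_Wf_apply hP hQ, ← Wf_mul_self]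
  have := (Wf_pos (f := f) (p := p)).ne'
  field_simp

theorem lapS_eq {φ : ℝ × ℝ → ℝ} (hX : DifferentiableAt ℝ (fluxX f φ) p)
    (hY : DifferentiableAt ℝ (fluxY f φ) p) :
    lapS f φ p
      = -((pdx (fluxX f φ) p + pdy (fluxY f φ) p) * Sf f p
          - fluxX f φ p * (Pf f p * pdx (Pf f) p + Qf f p * pdx (Qf f) p)
          - fluxY f φ p * (Pf f p * pdy (Pf f) p + Qf f p * pdy (Qf f) p)) / Sf f p ^ 2 := by
  change -(1 / Wf f p) * (fderiv ℝ (fun q => fluxX f φ q / Wf f q) p (1, 0)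
    + fderiv ℝ (fun q => fluxY f φ q / Wf f q) p (0, 1)) = _
  rw [fderiv_div_Wf_apply hP hQ hX, fderiv_div_Wf_apply hP hQ hY, ← Wf_mul_self]
  have := (Wf_pos (f := f) (p := p)).ne'
  field_simp
  simp only [pdx, pdy]
  ring

end FirstOrder

section SecondOrder

variable (hf : ContDiffAt ℝ 2 f p)
include hf

theorem differentiableAt_pdx : DifferentiableAt ℝ (pdx f) p :=
  ((hf.fderiv_right le_rfl).differentiableAt one_ne_zero).clm_apply (differentiableAt_const _)

theorem differentiableAt_pdy : DifferentiableAt ℝ (pdy f) p :=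
  ((hf.fderiv_right le_rfl).differentiableAt one_ne_zero).clm_apply (differentiableAt_const _)

theorem differentiableAt_Pf : DifferentiableAt ℝ (Pf f) p := by
  have := differentiableAt_pdx hf; unfold Pf; fun_prop

theorem differentiableAt_Qf : DifferentiableAt ℝ (Qf f) p := by
  have := differentiableAt_pdy hf; unfold Qf; fun_prop

theorem pdy_pdx : pdy (pdx f) p = pdx (pdy f) p := by
  have hdf : DifferentiableAt ℝ (fderiv ℝ f) p :=
    (hf.fderiv_right le_rfl).differentiableAt one_ne_zero
  have happly (v w : ℝ × ℝ) :
      fderiv ℝ (fun q => fderiv ℝ f q v) p w = fderiv ℝ (fderiv ℝ f) p w v := by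
    simp [fderiv_clm_apply hdf (differentiableAt_const v)]
  change fderiv ℝ (fun q => fderiv ℝ f q (1, 0)) p (0, 1)
    = fderiv ℝ (fun q => fderiv ℝ f q (0, 1)) p (1, 0)
  rw [happly, happly]
  exact hf.isSymmSndFDerivAt (by simp [minSmoothness_of_isRCLikeNormedField]) _ _

theorem pdx_Pf : pdx (Pf f) p = pdx (pdx f) p := by
  simp [pdx, fderiv_Pf_apply (differentiableAt_pdx hf)]

theorem pdy_Pf : pdy (Pf f) p = pdx (pdy f) p + 1 / 2 := by
  rw [← pdy_pdx hf]; simp [pdy, fderiv_Pf_apply (differentiableAt_pdx hf)]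

theorem pdx_Qf : pdx (Qf f) p = pdx (pdy f) p - 1 / 2 := by
  simp [pdx, fderiv_Qf_apply (differentiableAt_pdy hf)]

theorem pdy_Qf : pdy (Qf f) p = pdy (pdy f) p := by
  simp [pdy, fderiv_Qf_apply (differentiableAt_pdy hf)]

theorem lapS_fst :
    lapS f (fun q => q.1) p = (Pf f p * Kf f p + Qf f p * Sf f p) / Sf f p ^ 2 := by
  have hP := differentiableAt_Pf hf
  have hQ := differentiableAt_Qf hf
  have hGx : pdx (Gf f) p = 2 * Qf f p * pdx (Qf f) p := fderiv_Gf_apply hQ _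
  have hFy : pdy (fun q => -Ff f q) p = -(Pf f p * pdy (Qf f) p + Qf f p * pdy (Pf f) p) :=
    fderiv_neg_Ff_apply hP hQ _
  rw [lapS_eq hP hQ (by rw [fluxX_fst]; unfold Gf; fun_prop)
      (by rw [fluxY_fst]; unfold Ff; fun_prop),
    fluxX_fst, fluxY_fst, hGx, hFy, pdx_Pf hf, pdy_Pf hf, pdx_Qf hf, pdy_Qf hf]
  congr 1
  simp only [Kf, Sf, Ef, Ff, Gf]
  ring

theorem lapS_snd :
    lapS f (fun q => q.2) p = (Qf f p * Kf f p - Pf f p * Sf f p) / Sf f p ^ 2 := by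
  have hP := differentiableAt_Pf hf
  have hQ := differentiableAt_Qf hf
  have hEy : pdy (Ef f) p = 2 * Pf f p * pdy (Pf f) p := fderiv_Ef_apply hP _
  have hFx : pdx (fun q => -Ff f q) p = -(Pf f p * pdx (Qf f) p + Qf f p * pdx (Pf f) p) :=
    fderiv_neg_Ff_apply hP hQ _
  rw [lapS_eq hP hQ (by rw [fluxX_snd]; unfold Ff; fun_prop)
      (by rw [fluxY_snd]; unfold Ef; fun_prop),
    fluxX_snd, fluxY_snd, hEy, hFx, pdx_Pf hf, pdy_Pf hf, pdx_Qf hf, pdy_Qf hf]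
  congr 1
  simp only [Kf, Sf, Ef, Ff, Gf]
  ring

theorem lapS_self :
    lapS f f p = -Kf f p / Sf f p ^ 2 - p.2 / 2 * lapS f (fun q => q.1) p
      + p.1 / 2 * lapS f (fun q => q.2) p := by
  have hP := differentiableAt_Pf hf
  have hQ := differentiableAt_Qf hf
  have hE : DifferentiableAt ℝ (Ef f) p := by unfold Ef; fun_prop
  have hF : DifferentiableAt ℝ (Ff f) p := by unfold Ff; fun_prop
  have hG : DifferentiableAt ℝ (Gf f) p := by unfold Gf; fun_prop
  have hXx : pdx (fun q => Pf f q - q.2 / 2 * Gf f q - q.1 / 2 * Ff f q) p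
      = pdx (Pf f) p - p.2 / 2 * pdx (Gf f) p - (Ff f p / 2 + p.1 / 2 * pdx (Ff f) p) := by
    simp only [pdx]
    rw [fderiv_fun_sub (by fun_prop) (by fun_prop), fderiv_fun_sub hP (by fun_prop),
      fderiv_fun_mul (by fun_prop) hG, fderiv_fun_mul (by fun_prop) hF]
    simp only [sub_apply, add_apply, smul_apply, smul_eq_mul, fderiv_fst_div_two_apply,
      fderiv_snd_div_two_apply]
    ring
  have hYy : pdy (fun q => Qf f q + q.2 / 2 * Ff f q + q.1 / 2 * Ef f q) p
      = pdy (Qf f) p + (Ff f p / 2 + p.2 / 2 * pdy (Ff f) p) + p.1 / 2 * pdy (Ef f) p := by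
    simp only [pdy]
    rw [fderiv_fun_add (by fun_prop) (by fun_prop), fderiv_fun_add hQ (by fun_prop),
      fderiv_fun_mul (by fun_prop) hF, fderiv_fun_mul (by fun_prop) hE]
    simp only [add_apply, smul_apply, smul_eq_mul, fderiv_fst_div_two_apply,
      fderiv_snd_div_two_apply]
    ring
  have hGx : pdx (Gf f) p = 2 * Qf f p * pdx (Qf f) p := fderiv_Gf_apply hQ _
  have hFx : pdx (Ff f) p = Pf f p * pdx (Qf f) p + Qf f p * pdx (Pf f) p :=
    fderiv_Ff_apply hP hQ _
  have hFy : pdy (Ff f) p = Pf f p * pdy (Qf f) p + Qf f p * pdy (Pf f) p :=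
    fderiv_Ff_apply hP hQ _
  have hEy : pdy (Ef f) p = 2 * Pf f p * pdy (Pf f) p := fderiv_Ef_apply hP _
  rw [lapS_eq hP hQ (by rw [fluxX_self]; fun_prop) (by rw [fluxY_self]; fun_prop),
    lapS_fst hf, lapS_snd hf, fluxX_self, fluxY_self, hXx, hYy, hGx, hFx, hFy, hEy,
    pdx_Pf hf, pdy_Pf hf, pdx_Qf hf, pdy_Qf hf]
  have := (Sf_pos (f := f) (p := p)).ne'
  field_simp
  simp only [Kf, Sf, Ef, Ff, Gf]
  ring

end SecondOrder

end GraphSurface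

section Ruled

open Filter Topology

variable {f u : ℝ × ℝ → ℝ} {p : ℝ × ℝ}

theorem fderiv_ruled_apply (hu : DifferentiableAt ℝ u p) (hP : DifferentiableAt ℝ (Pf f) p)
    (hQ : DifferentiableAt ℝ (Qf f) p) (hruled : ∀ᶠ q in 𝓝 p, Qf f q = -(u q) * Pf f q)
    (v : ℝ × ℝ) :
    fderiv ℝ (Qf f) p v + fderiv ℝ u p v * Pf f p + u p * fderiv ℝ (Pf f) p v = 0 := by
  have hzero : (fun q => Qf f q + u q * Pf f q) =ᶠ[𝓝 p] fun _ => 0 :=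
    hruled.mono fun q hq => by
      change Qf f q + u q * Pf f q = 0; rw [hq]; ring
  have hd := DFunLike.congr_fun (hzero.fderiv_eq (𝕜 := ℝ)) v
  rw [fderiv_fun_add hQ (hu.fun_mul hP), fderiv_fun_mul hu hP] at hd
  simp only [add_apply, smul_apply, smul_eq_mul, fderiv_fun_const, Pi.zero_apply,
    zero_apply] at hd
  linear_combination hd

theorem hessian_ruling_eq_zero (hf : ContDiffAt ℝ 2 f p) (hu : DifferentiableAt ℝ u p)
    (hruled : ∀ᶠ q in 𝓝 p, Qf f q = -(u q) * Pf f q)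
    (hburgers : pdy u p + u p * pdx u p = 0) :
    u p ^ 2 * pdx (pdx f) p + 2 * u p * pdx (pdy f) p + pdy (pdy f) p = 0 := by
  have hP := differentiableAt_Pf hf
  have hQ := differentiableAt_Qf hf
  have hx : pdx (Qf f) p + pdx u p * Pf f p + u p * pdx (Pf f) p = 0 :=
    fderiv_ruled_apply hu hP hQ hruled (1, 0)
  have hy : pdy (Qf f) p + pdy u p * Pf f p + u p * pdy (Pf f) p = 0 :=
    fderiv_ruled_apply hu hP hQ hruled (0, 1)
  rw [pdx_Pf hf, pdx_Qf hf] at hx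
  rw [pdy_Pf hf, pdy_Qf hf] at hy
  linear_combination u p * hx + hy - Pf f p * hburgers

end Ruled

theorem finite_type_S2_case_l1_l3_zero_general
    (D : Set (ℝ × ℝ)) (hD : IsOpen D)
    (f : ℝ × ℝ → ℝ) (hf : ContDiffOn ℝ (⊤ : ℕ∞) f D)
    (u : ℝ × ℝ → ℝ) (hu : ContDiffOn ℝ (⊤ : ℕ∞) u D)
    (hruled : ∀ p ∈ D, Qf f p = -(u p) * Pf f p)
    (hburgers : ∀ p ∈ D, pdy u p + u p * pdx u p = 0)
    (l1 l2 l3 : ℝ)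
    (h1 : ∀ p ∈ D, lapS f (fun q => q.1) p = l1 * p.1)
    (h2 : ∀ p ∈ D, lapS f (fun q => q.2) p = l2 * p.2)
    (h3 : ∀ p ∈ D, lapS f f p = l3 * f p)
    (hl1 : l1 = 0) (hl3 : l3 = 0)
    (hP : ∀ p ∈ D, Pf f p ≠ 0) :
    ∀ p ∈ D,
      (H1f f p = u p * Wf f p) ∧
      (pdx (pdx f) p + pdy (pdy f) p = u p * (1 + Pf f p ^ 2 * (1 + u p ^ 2))) ∧
      (-(Pf f p * (1 + u p ^ 2)) / Wf f p ^ 2 = l2 * p.2) ∧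
      (2 * u p / Wf f p ^ 2 = l2 * (p.1 * p.2)) := by
  intro p hp
  have hfp : ContDiffAt ℝ 2 f p :=
    (hf.contDiffAt (hD.mem_nhds hp)).of_le (WithTop.coe_le_coe.mpr le_top)
  have hup : DifferentiableAt ℝ u p := (hu.contDiffAt (hD.mem_nhds hp)).differentiableAt (by simp)
  have hQ := hruled p hp
  have hS : Sf f p = 1 + Pf f p ^ 2 * (1 + u p ^ 2) := by simp only [Sf, hQ]; ring
  have hSne : Sf f p ≠ 0 := Sf_pos.ne'
  have hK : Kf f p = u p * Sf f p := by
    have h := h1 p hp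
    rw [lapS_fst hfp, hl1, zero_mul, div_eq_zero_iff, hQ] at h
    exact mul_left_cancel₀ (hP p hp) (by linear_combination h.resolve_right (pow_ne_zero 2 hSne))
  have hT := hessian_ruling_eq_zero hfp hup (Filter.mem_of_superset (hD.mem_nhds hp) hruled)
    (hburgers p hp)
  have hlap : pdx (pdx f) p + pdy (pdy f) p = u p * Sf f p := by
    rw [← hK]; simp only [Kf, Ef, Ff, Gf, hQ]; linear_combination (-Pf f p ^ 2) * hT
  refine ⟨?_, by rw [hlap, hS], ?_, ?_⟩
  · rw [H1f, hlap, ← Wf_mul_self]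
    field_simp
  · rw [← h2 p hp, lapS_snd hfp, hK, hQ, Wf_sq]
    field_simp
    ring
  · have h := h3 p hp
    rw [lapS_self hfp, h1 p hp, h2 p hp, hl1, hl3, hK] at h
    rw [Wf_sq]
    field_simp at h ⊢
    linear_combination -h

/-- **Second family, case `λ₁ = λ₃ = 0`, `λ₂ ≠ 0`**: under the ruled hypothesis `Q = −uP`,
`u_y + u·u_x = 0`, if `Δx = λ₁x`, `Δy = λ₂y`, `Δf = λ₃f` on `D` with `λ₁ = λ₃ = 0`, `λ₂ ≠ 0`,
and `P` nowhere zero on `D`, then `H₁ = uW`, i.e. `f_xx + f_yy = u(1 + P²(1 + u²))`, and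
moreover `−P(1 + u²)/W² = λ₂y` and `2u/W² = λ₂xy` on `D`. -/
theorem finite_type_S2_case_l1_l3_zero
    (D : Set (ℝ × ℝ)) (hD : IsOpen D) (hDne : D.Nonempty)
    (f : ℝ × ℝ → ℝ) (hf : ContDiffOn ℝ (⊤ : ℕ∞) f D)
    (u : ℝ × ℝ → ℝ) (hu : ContDiffOn ℝ (⊤ : ℕ∞) u D)
    (hruled : ∀ p ∈ D, Qf f p = -(u p) * Pf f p)
    (hburgers : ∀ p ∈ D, pdy u p + u p * pdx u p = 0)
    (l1 l2 l3 : ℝ)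
    (h1 : ∀ p ∈ D, lapS f (fun q => q.1) p = l1 * p.1)
    (h2 : ∀ p ∈ D, lapS f (fun q => q.2) p = l2 * p.2)
    (h3 : ∀ p ∈ D, lapS f f p = l3 * f p)
    (hl1 : l1 = 0) (hl3 : l3 = 0) (hl2 : l2 ≠ 0)
    (hP : ∀ p ∈ D, Pf f p ≠ 0) :
    ∀ p ∈ D,
      (H1f f p = u p * Wf f p) ∧
      (pdx (pdx f) p + pdy (pdy f) p = u p * (1 + Pf f p ^ 2 * (1 + u p ^ 2))) ∧
      (-(Pf f p * (1 + u p ^ 2)) / Wf f p ^ 2 = l2 * p.2) ∧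
      (2 * u p / Wf f p ^ 2 = l2 * (p.1 * p.2)) :=
  finite_type_S2_case_l1_l3_zero_general D hD f hf u hu hruled hburgers l1 l2 l3 h1 h2 h3 hl1 hl3 hP
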